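/- Let k ∈ ℕ, h ∈ Ĥ_0^{p(k)}, and t > 0, and assume the set defining θ̲_t is nonempty. Then for every θ ∈ [0,1] with θ < θ̲_t, either Φ_t^0(h(θ)) < u_0 pointwise, or Φ_t^0(h(θ)) touches u_0 from below. -/

import Mathlib

open Filter Topology

namespace FK

noncomputable section

abbrev Zn (n : ℕ) := Fin n → ℤ

variable {n : ℕ}

/-- the ℓ¹ norm `‖i‖ = ∑ |i_j|` on `ℤⁿ` -/
def znorm (i : Zn n) : ℕ := ∑ j, (i j).natAbs

/-- the finite ball `{j : ‖j - i‖ ≤ r}` as a `Finset` -/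
def ball (r : ℕ) (i : Zn n) : Finset (Zn n) :=
  (Finset.Icc (fun m => i m - (r : ℤ)) (fun m => i m + (r : ℤ))).filter fun j => znorm (j - i) ≤ r

/-- the shift `(shift j u) i = u (i + j)`, i.e. `τ_{-jₙ}ⁿ ⋯ τ_{-j₁}¹ u` -/
def shift (j : Zn n) (u : Zn n → ℝ) : Zn n → ℝ := fun i => u (i + j)

/-- the local potential `S_j(u) = s(τ_{-j} u)` -/
def Spot (s : (Zn n → ℝ) → ℝ) (j : Zn n) (u : Zn n → ℝ) : ℝ := s (shift j u)

/-- partial derivative `∂_i F(u)` of a functional `F` with respect to the coordinate `u(i)` -/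
def pd (F : (Zn n → ℝ) → ℝ) (i : Zn n) (u : Zn n → ℝ) : ℝ :=
  deriv (fun t => F (Function.update u i t)) (u i)

/-- second partial derivative `∂_{i,k} F(u)` -/
def pd2 (F : (Zn n → ℝ) → ℝ) (i k : Zn n) (u : Zn n → ℝ) : ℝ :=
  pd (fun w => pd F k w) i u

/-- the gradient field `W(u)(i) = ∑_{j : ‖j-i‖ ≤ r} ∂_i S_j(u)` -/
def grad (r : ℕ) (s : (Zn n → ℝ) → ℝ) (u : Zn n → ℝ) : Zn n → ℝ :=
  fun i => ∑ j ∈ ball r i, pd (Spot s j) i u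

/-- `u` is a solution of the Euler–Lagrange equation (EL):
`∑_{j : ‖j-i‖ ≤ r} ∂_i S_j(u) = 0` for all `i` -/
def IsSolution (r : ℕ) (s : (Zn n → ℝ) → ℝ) (u : Zn n → ℝ) : Prop :=
  ∀ i, grad r s u i = 0

/-- the standard basis vector `e_m` -/
def unitv (m : Fin n) : Zn n := fun m' => if m' = m then 1 else 0

/-- the first standard basis vector `e₁` -/
def e1v : Zn n := fun m => if (m : ℕ) = 0 then 1 else 0

/-- `u` has period `p m` in the `m`-th coordinate direction, for every `m` -/
def Periodic (p : Fin n → ℕ) (u : Zn n → ℝ) : Prop :=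
  ∀ (i : Zn n) (m : Fin n), u (i + (p m : ℤ) • unitv m) = u i

/-- `u` is `1`-periodic in every coordinate direction -/
def PeriodicAll (u : Zn n → ℝ) : Prop := Periodic (fun _ => 1) u

/-- `J_0(u) = S_0(u)` -/
def J0 (s : (Zn n → ℝ) → ℝ) (u : Zn n → ℝ) : ℝ := Spot s 0 u

/-- `c_0 = inf J_0` over fully periodic configurations -/
def c0 (s : (Zn n → ℝ) → ℝ) : ℝ := sInf {y | ∃ u, PeriodicAll u ∧ J0 s u = y}

/-- `M_0`, the set of fully periodic minimizers of `J_0` -/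
def M0 (s : (Zn n → ℝ) → ℝ) : Set (Zn n → ℝ) := {u | PeriodicAll u ∧ J0 s u = c0 s}

/-- the fundamental domain `T_0^p = ∏_j {0, …, p_j - 1}` -/
def Tbox (p : Fin n → ℕ) : Finset (Zn n) :=
  Finset.Icc 0 fun m => (p m : ℤ) - 1

/-- `J_0^p(u) = ∑_{j ∈ T_0^p} S_j(u)` -/
def J0p (s : (Zn n → ℝ) → ℝ) (p : Fin n → ℕ) (u : Zn n → ℝ) : ℝ :=
  ∑ j ∈ Tbox p, Spot s j u

/-- `c_0^p = inf J_0^p` over `Λ_0^p` -/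
def c0p (s : (Zn n → ℝ) → ℝ) (p : Fin n → ℕ) : ℝ :=
  sInf {y | ∃ u, Periodic p u ∧ J0p s p u = y}

/-- `I_0^p(u) = J_0^p(u + v_0)` -/
def I0p (s : (Zn n → ℝ) → ℝ) (p : Fin n → ℕ) (v0 u : Zn n → ℝ) : ℝ :=
  J0p s p (u + v0)

/-- the norm `‖u‖_{Λ_0^p} = (∑_{j ∈ T_0^p} |u(j)|²)^{1/2}` -/
def lamNorm (p : Fin n → ℕ) (u : Zn n → ℝ) : ℝ :=
  Real.sqrt (∑ j ∈ Tbox p, (u j) ^ 2)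

/-- `G_0^p = {u ∈ Λ_0^p : 0 ≤ u ≤ w_0 - v_0}` -/
def G0 (p : Fin n → ℕ) (v0 w0 : Zn n → ℝ) : Set (Zn n → ℝ) :=
  {u | Periodic p u ∧ 0 ≤ u ∧ u ≤ w0 - v0}

/-- the isometric identification of `Λ_0^p` with the euclidean space `ℝ^{T_0^p}` -/
def toEuc (p : Fin n → ℕ) (u : Zn n → ℝ) : EuclideanSpace ℝ (Tbox (n := n) p) :=
  WithLp.toLp 2 fun j : Tbox (n := n) p => u j.1

/-- inverse of `toEuc`: extend values on `T_0^p` `p`-periodically -/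
def extendP (p : Fin n → ℕ) (x : EuclideanSpace ℝ (Tbox (n := n) p)) : Zn n → ℝ :=
  fun i => if h : (fun m => i m % (p m : ℤ)) ∈ Tbox p then x ⟨_, h⟩ else 0

/-- `I_0^p` read through the identification of `Λ_0^p` with euclidean space -/
def I0euc (s : (Zn n → ℝ) → ℝ) (p : Fin n → ℕ) (v0 : Zn n → ℝ) :
    EuclideanSpace ℝ (Tbox (n := n) p) → ℝ :=
  fun x => I0p s p v0 (extendP p x)

/-- `(I_0^p)'(u) = 0`: vanishing of the Fréchet derivative of `I_0^p` at `u`, computed through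
the isometric identification of `Λ_0^p` with euclidean space -/
def IsCrit0 (s : (Zn n → ℝ) → ℝ) (p : Fin n → ℕ) (v0 : Zn n → ℝ) (u : Zn n → ℝ) : Prop :=
  fderiv ℝ (I0euc s p v0) (toEuc p u) = 0

/-- membership in `H_0^p`: a norm-continuous path in `G_0^p` from `0` to `w_0 - v_0` -/
def PathIn (p : Fin n → ℕ) (v0 w0 : Zn n → ℝ) (h : ℝ → Zn n → ℝ) : Prop :=
  ContinuousOn (fun θ => toEuc p (h θ)) (Set.Icc 0 1) ∧
  (∀ θ ∈ Set.Icc (0 : ℝ) 1, h θ ∈ G0 p v0 w0) ∧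
  h 0 = 0 ∧ h 1 = w0 - v0

/-- the mountain pass level `d_0^p = inf_{h ∈ H_0^p} max_{θ ∈ [0,1]} I_0^p(h(θ))` -/
def d0p (s : (Zn n → ℝ) → ℝ) (p : Fin n → ℕ) (v0 w0 : Zn n → ℝ) : ℝ :=
  sInf {y | ∃ h, PathIn p v0 w0 h ∧
    y = sSup ((fun θ => I0p s p v0 (h θ)) '' Set.Icc 0 1)}

/-- `Φ` is the (negative gradient) semiflow of `I_0^p` on `Λ_0^p`:
`-∂_t Φ_t(u)(i) = ∑_{j : ‖j-i‖ ≤ r} ∂_i S_j(Φ_t(u) + v_0)`, `Φ_0(u) = u` -/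
def IsFlow (r : ℕ) (s : (Zn n → ℝ) → ℝ) (p : Fin n → ℕ) (v0 : Zn n → ℝ)
    (Φ : ℝ → (Zn n → ℝ) → (Zn n → ℝ)) : Prop :=
  (∀ u, Periodic p u → ∀ t, Periodic p (Φ t u)) ∧
  (∀ u, Φ 0 u = u) ∧
  (∀ u, Periodic p u → ∀ i, ∀ t ∈ Set.Ici (0 : ℝ),
    HasDerivWithinAt (fun τ => Φ τ u i) (-(grad r s (Φ t u + v0) i)) (Set.Ici 0) t)

/-- `p(k) = (k, 1, …, 1)` -/
def pk (n k : ℕ) : Fin n → ℕ := fun m => if (m : ℕ) = 0 then k else 1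

/-- `u` touches `v` from below -/
def TouchesBelow (u v : Zn n → ℝ) : Prop := u ≤ v ∧ u ≠ v ∧ ∃ i, u i = v i

/-- `θ̲_t = sup {θ ∈ [0,1] : Φ_t(h(θ)) ≤ u₀, Φ_t(h(θ)) ≠ u₀}` -/
def thetaLow (Φ : ℝ → (Zn n → ℝ) → (Zn n → ℝ)) (h : ℝ → Zn n → ℝ) (u0 : Zn n → ℝ)
    (t : ℝ) : ℝ :=
  sSup {θ | θ ∈ Set.Icc (0 : ℝ) 1 ∧ Φ t (h θ) ≤ u0 ∧ Φ t (h θ) ≠ u0}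

/-- `θ̄_t = inf {θ ∈ [0,1] : Φ_t(h(θ)) ≥ u₀, Φ_t(h(θ)) ≠ u₀}` -/
def thetaHigh (Φ : ℝ → (Zn n → ℝ) → (Zn n → ℝ)) (h : ℝ → Zn n → ℝ) (u0 : Zn n → ℝ)
    (t : ℝ) : ℝ :=
  sInf {θ | θ ∈ Set.Icc (0 : ℝ) 1 ∧ u0 ≤ Φ t (h θ) ∧ Φ t (h θ) ≠ u0}

/-- `s` read through the identification of `ℝ^{B_0^r}` with euclidean space (used to state that
`s ∈ C²(ℝ^{B_0^r}, ℝ)`) -/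
def sEuc (r : ℕ) (s : (Zn n → ℝ) → ℝ) : EuclideanSpace ℝ (ball r (0 : Zn n)) → ℝ :=
  fun x => s fun i => if h : i ∈ ball r (0 : Zn n) then x ⟨i, h⟩ else 0

/-- The standing assumptions on the generalized Frenkel–Kontorova model: `s ∈ C²(ℝ^{B_0^r}, ℝ)`
(encoded by `localized` and `smooth`) satisfying (S1)–(S4). -/
structure Setup (n r : ℕ) : Type where
  /-- the local potential -/
  s : (Zn n → ℝ) → ℝ
  npos : 0 < n
  /-- `s` only depends on the coordinates in `B_0^r` -/
  localized : ∀ u v : Zn n → ℝ, (∀ k, znorm k ≤ r → u k = v k) → s u = s v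
  /-- `s` is `C²` -/
  smooth : ContDiff ℝ 2 (sEuc r s)
  /-- (S1): periodicity -/
  S1 : ∀ u : Zn n → ℝ, s (fun i => u i + 1) = s u
  /-- (S2): bounded below -/
  S2_bddBelow : ∃ b : ℝ, ∀ u, b ≤ s u
  /-- (S2): coercivity -/
  S2_coercive : ∀ k j : Zn n, znorm k ≤ r → znorm j ≤ r → znorm (k - j) = 1 →
    ∀ M : ℝ, ∃ R : ℝ, ∀ u : Zn n → ℝ, R ≤ |u k - u j| → M ≤ s u
  /-- (S3): off-diagonal second partials nonpositive -/
  S3 : ∀ k j : Zn n, znorm k ≤ r → znorm j ≤ r → k ≠ j → ∀ u, pd2 s k j u ≤ 0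
  /-- (S3): strict negativity for nearest neighbours of `0` -/
  S3' : ∀ j : Zn n, znorm j = 1 → ∀ u, pd2 s 0 j u < 0
  /-- the constant of (S4) -/
  C : ℝ
  /-- (S4): uniformly bounded second partials -/
  S4 : ∀ i k : Zn n, znorm i ≤ r → znorm k ≤ r → ∀ u, |pd2 s i k u| ≤ C

/-- 1-periodicity in the directions `e_2, …, e_n` with periods `q` -/
def Periodic1 (q : Fin n → ℕ) (u : Zn n → ℝ) : Prop :=
  ∀ (i : Zn n) (m : Fin n), 1 ≤ (m : ℕ) → u (i + (q m : ℤ) • unitv m) = u i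

/-- the slab `{i} × T_1^q` as a `Finset` -/
def slab (q : Fin n → ℕ) (i : ℤ) : Finset (Zn n) :=
  Finset.Icc (fun m => if (m : ℕ) = 0 then i else 0)
    (fun m => if (m : ℕ) = 0 then i else (q m : ℤ) - 1)

/-- membership in `Λ_1^q` -/
def MemLam1 (q : Fin n → ℕ) (u : Zn n → ℝ) : Prop :=
  Periodic1 q u ∧ Summable fun i : ℤ => ∑ j ∈ slab q i, |u j|

/-- the norm `‖u‖_{Λ_1^q} = ∑_{ℤ × T_1^q} |u(j)| + (∑_{ℤ × T_1^q} |u(j)|²)^{1/2}` -/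
def lamNorm1 (q : Fin n → ℕ) (u : Zn n → ℝ) : ℝ :=
  (∑' i : ℤ, ∑ j ∈ slab q i, |u j|) + Real.sqrt (∑' i : ℤ, ∑ j ∈ slab q i, (u j) ^ 2)

/-- `J_1(u) = liminf_{p → -∞, q → ∞} ∑_{i=p}^q [J_0(τ^1_{-i} u) - c_0]` -/
def J1 (s : (Zn n → ℝ) → ℝ) (u : Zn n → ℝ) : ℝ :=
  liminf (fun pq : ℤ × ℤ => ∑ i ∈ Finset.Icc pq.1 pq.2, (Spot s (i • e1v) u - c0 s))
    (atBot ×ˢ atTop)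

/-- the class `Γ_1(v_0, w_0)` of heteroclinic configurations from `v_0` to `w_0` -/
def Gamma1 (v0 w0 : Zn n → ℝ) : Set (Zn n → ℝ) :=
  {u | Periodic1 (fun _ => 1) u ∧ v0 ≤ u ∧ u ≤ w0 ∧
    Tendsto (fun i : ℤ => u (i • e1v) - v0 (i • e1v)) atBot (nhds 0) ∧
    Tendsto (fun i : ℤ => u (i • e1v) - w0 (i • e1v)) atTop (nhds 0)}

/-- `c_1(v_0, w_0) = inf_{Γ_1(v_0,w_0)} J_1` -/
def c1 (s : (Zn n → ℝ) → ℝ) (v0 w0 : Zn n → ℝ) : ℝ :=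
  sInf {y | ∃ u ∈ Gamma1 v0 w0, J1 s u = y}

/-- `M_1(v_0, w_0)`, the minimizers of `J_1` on `Γ_1(v_0, w_0)` -/
def M1 (s : (Zn n → ℝ) → ℝ) (v0 w0 : Zn n → ℝ) : Set (Zn n → ℝ) :=
  {u | u ∈ Gamma1 v0 w0 ∧ J1 s u = c1 s v0 w0}

/-- `I_1^q(u) = liminf_{p → -∞, q' → ∞} ∑_{i=p}^{q'} ∑_{j ∈ {i} × T_1^q} [S_j(u + v_1) - c_0]` -/
def I1q (s : (Zn n → ℝ) → ℝ) (v1 : Zn n → ℝ) (q : Fin n → ℕ) (u : Zn n → ℝ) : ℝ :=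
  liminf (fun pq : ℤ × ℤ =>
      ∑ i ∈ Finset.Icc pq.1 pq.2, ∑ j ∈ slab q i, (Spot s j (u + v1) - c0 s))
    (atBot ×ˢ atTop)

/-- the pairing `(I_1^q)'(u) v = ∑_{i ∈ ℤ} ∑_{j ∈ {i} × T_1^q} v(j) ∑_{k : ‖k-j‖ ≤ r} ∂_j S_k(u + v_1)` -/
def pair1 (r : ℕ) (s : (Zn n → ℝ) → ℝ) (v1 : Zn n → ℝ) (q : Fin n → ℕ)
    (u v : Zn n → ℝ) : ℝ :=
  ∑' i : ℤ, ∑ j ∈ slab q i, v j * grad r s (u + v1) j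

/-- `(I_1^q)'(u) = 0` -/
def IsCrit1 (r : ℕ) (s : (Zn n → ℝ) → ℝ) (v1 : Zn n → ℝ) (q : Fin n → ℕ)
    (u : Zn n → ℝ) : Prop :=
  ∀ v, MemLam1 q v → pair1 r s v1 q u v = 0

/-- `G_1^q = {u ∈ Λ_1^q : 0 ≤ u ≤ w_1 - v_1}` -/
def G1 (q : Fin n → ℕ) (v1 w1 : Zn n → ℝ) : Set (Zn n → ℝ) :=
  {u | MemLam1 q u ∧ 0 ≤ u ∧ u ≤ w1 - v1}

/-- membership in `H_1^q`: a `‖·‖_{Λ_1^q}`-continuous path in `G_1^q` from `0` to `w_1 - v_1` -/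
def Path1 (q : Fin n → ℕ) (v1 w1 : Zn n → ℝ) (h : ℝ → Zn n → ℝ) : Prop :=
  (∀ θ ∈ Set.Icc (0 : ℝ) 1, h θ ∈ G1 q v1 w1) ∧ h 0 = 0 ∧ h 1 = w1 - v1 ∧
  ∀ θ ∈ Set.Icc (0 : ℝ) 1, ∀ ε > (0 : ℝ), ∃ δ > (0 : ℝ), ∀ θ' ∈ Set.Icc (0 : ℝ) 1,
    |θ' - θ| ≤ δ → lamNorm1 q (h θ' - h θ) ≤ ε

/-- the heteroclinic mountain pass level `d_1^q` -/
def d1q (s : (Zn n → ℝ) → ℝ) (v1 w1 : Zn n → ℝ) (q : Fin n → ℕ) : ℝ :=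
  sInf {y | ∃ h, Path1 q v1 w1 h ∧
    y = sSup ((fun θ => I1q s v1 q (h θ)) '' Set.Icc 0 1)}

/-- `q(k) = (k, 1, …, 1) ∈ ℕ^{n-1}` (indexed by the directions `e_2, …, e_n`) -/
def qk (n k : ℕ) : Fin n → ℕ := fun m => if (m : ℕ) = 1 then k else 1

-- ===== auxiliary development =====
section Aux
variable {n r : ℕ}

lemma coordBound {i j : Zn n} (hj : znorm (j - i) ≤ r) (m : Fin n) :
    i m - (r : ℤ) ≤ j m ∧ j m ≤ i m + (r : ℤ) := by
  have h1 : ((j - i) m).natAbs ≤ r := le_trans (Finset.single_le_sum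
    (f := fun m' => ((j - i) m').natAbs) (fun _ _ => Nat.zero_le _) (Finset.mem_univ m)) hj
  have h2 : |j m - i m| ≤ (r : ℤ) := by
    rw [Int.abs_eq_natAbs]
    have : (j - i) m = j m - i m := rfl
    rw [← this]
    exact_mod_cast h1
  have h3 := abs_le.1 h2
  omega

lemma mem_ball_of_znorm {i j : Zn n} (hj : znorm (j - i) ≤ r) : j ∈ ball r i := by
  refine Finset.mem_filter.2 ⟨Finset.mem_Icc.2 ⟨fun m => ?_, fun m => ?_⟩, hj⟩
  · show i m - (r : ℤ) ≤ j m; exact (coordBound hj m).1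
  · show j m ≤ i m + (r : ℤ); exact (coordBound hj m).2

lemma mem_ball_iff' {i j : Zn n} : j ∈ ball r i ↔ znorm (j - i) ≤ r :=
  ⟨fun hj => (Finset.mem_filter.1 hj).2, mem_ball_of_znorm⟩

lemma mem_ball_zero_iff {i : Zn n} : i ∈ ball r (0 : Zn n) ↔ znorm i ≤ r := by
  rw [mem_ball_iff', sub_zero]

lemma znorm_neg (i : Zn n) : znorm (-i) = znorm i := by
  unfold znorm; congr 1; funext j; simp

lemma mem_ball_iff {i j : Zn n} : j ∈ ball r i ↔ j - i ∈ ball r (0 : Zn n) := by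
  rw [mem_ball_iff', mem_ball_zero_iff]

end Aux
section Aux2
variable {n r : ℕ}

/-- extension of a euclidean vector by zero -/
def extB (x : EuclideanSpace ℝ (ball r (0 : Zn n))) : Zn n → ℝ :=
  fun i => if h : i ∈ ball r (0 : Zn n) then x ⟨i, h⟩ else 0

/-- projection to the euclidean space on the ball -/
def projB (u : Zn n → ℝ) : EuclideanSpace ℝ (ball r (0 : Zn n)) :=
  WithLp.toLp 2 fun b => u b.1

/-- basis vector -/
def eb (b : ball r (0 : Zn n)) : EuclideanSpace ℝ (ball r (0 : Zn n)) :=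
  EuclideanSpace.single b 1

lemma projB_extB (x : EuclideanSpace ℝ (ball r (0 : Zn n))) : projB (extB x) = x := by
  ext b
  simp [projB, extB, b.2]

lemma sEuc_apply (s : (Zn n → ℝ) → ℝ) (x : EuclideanSpace ℝ (ball r (0 : Zn n))) :
    sEuc r s x = s (extB x) := rfl

lemma s_eq_sEuc (P : Setup n r) (u : Zn n → ℝ) : P.s u = sEuc r P.s (projB u) := by
  rw [sEuc_apply]
  apply P.localized
  intro k hk
  simp [extB, mem_ball_zero_iff.2 hk, projB]

lemma projB_update (u : Zn n → ℝ) (a : Zn n) (ha : a ∈ ball r (0 : Zn n)) (t : ℝ) :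
    (projB (Function.update u a t) : EuclideanSpace ℝ (ball r (0 : Zn n)))
      = projB u + (t - u a) • eb ⟨a, ha⟩ := by
  ext b
  simp only [projB, eb, Function.update]
  rcases eq_or_ne b ⟨a, ha⟩ with hb | hb
  · subst hb
    simp [EuclideanSpace.single_apply, projB]
  · have hb' : b.1 ≠ a := fun hh => hb (Subtype.ext hh)
    simp [hb', hb, EuclideanSpace.single_apply, projB]

lemma pd_comp_projB (G : EuclideanSpace ℝ (ball r (0 : Zn n)) → ℝ)
    (hG : Differentiable ℝ G) (a : Zn n) (ha : a ∈ ball r (0 : Zn n)) (u : Zn n → ℝ) :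
    pd (fun w => G (projB w)) a u = fderiv ℝ G (projB u) (eb ⟨a, ha⟩) := by
  unfold pd
  have hcurve : ∀ t : ℝ, projB (Function.update u a t)
      = projB u + (t - u a) • eb ⟨a, ha⟩ := fun t => projB_update u a ha t
  have h1 : HasDerivAt (fun t : ℝ => projB u + (t - u a) • eb ⟨a, ha⟩)
      (eb ⟨a, ha⟩) (u a) := by
    have : HasDerivAt (fun t : ℝ => (t - u a) • eb ⟨a, ha⟩) ((1:ℝ) • eb ⟨a, ha⟩) (u a) :=
      (((hasDerivAt_id (u a)).sub_const (u a))).smul_const _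
    simpa using this.const_add (projB u)
  have h2 : HasDerivAt (fun t : ℝ => G (projB u + (t - u a) • eb ⟨a, ha⟩))
      (fderiv ℝ G (projB u + (u a - u a) • eb ⟨a, ha⟩) (eb ⟨a, ha⟩)) (u a) := by
    have := (hG _).hasFDerivAt.comp_hasDerivAt (u a) h1
    exact this
  have h3 : (fun t : ℝ => G (projB (Function.update u a t)))
      = fun t : ℝ => G (projB u + (t - u a) • eb ⟨a, ha⟩) := by
    funext t; rw [hcurve]
  rw [h3]
  have := h2.deriv
  simpa using this

/-- the partial-gradient functions -/
def gB (P : Setup n r) (b : ball r (0 : Zn n)) (x : EuclideanSpace ℝ (ball r (0 : Zn n))) : ℝ :=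
  fderiv ℝ (sEuc r P.s) x (eb b)

lemma sEuc_diff (P : Setup n r) : Differentiable ℝ (sEuc r P.s) :=
  P.smooth.differentiable (by norm_num)

lemma gB_diff (P : Setup n r) (b : ball r (0 : Zn n)) : Differentiable ℝ (gB P b) := by
  have h1 : ContDiff ℝ 1 (fderiv ℝ (sEuc r P.s)) := P.smooth.fderiv_right (by norm_num)
  exact h1.differentiable (by norm_num) |>.clm_apply (differentiable_const _)

lemma pd_eq_gB (P : Setup n r) (a : Zn n) (ha : a ∈ ball r (0 : Zn n)) (u : Zn n → ℝ) :
    pd P.s a u = gB P ⟨a, ha⟩ (projB u) := by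
  have h0 : P.s = fun w => sEuc r P.s (projB w) := funext fun w => s_eq_sEuc P w
  rw [gB, ← pd_comp_projB _ (sEuc_diff P) a ha u]
  congr 1

lemma pd2_eq (P : Setup n r) (a b : Zn n) (ha : a ∈ ball r (0 : Zn n))
    (hb : b ∈ ball r (0 : Zn n)) (u : Zn n → ℝ) :
    pd2 P.s a b u = fderiv ℝ (gB P ⟨b, hb⟩) (projB u) (eb ⟨a, ha⟩) := by
  unfold pd2
  have h0 : (fun w => pd P.s b w) = fun w => gB P ⟨b, hb⟩ (projB w) :=
    funext fun w => pd_eq_gB P b hb w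
  rw [h0, pd_comp_projB _ (gB_diff P _) a ha u]

lemma gB_deriv_nonpos (P : Setup n r) (a b : ball r (0 : Zn n)) (hab : a ≠ b)
    (x : EuclideanSpace ℝ (ball r (0 : Zn n))) :
    fderiv ℝ (gB P b) x (eb a) ≤ 0 := by
  have h1 : pd2 P.s a.1 b.1 (extB x) ≤ 0 :=
    P.S3 a.1 b.1 (mem_ball_zero_iff.1 a.2) (mem_ball_zero_iff.1 b.2)
      (fun hh => hab (Subtype.ext hh)) _
  rwa [pd2_eq P a.1 b.1 a.2 b.2, projB_extB] at h1

lemma gB_deriv_bound (P : Setup n r) (a b : ball r (0 : Zn n))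
    (x : EuclideanSpace ℝ (ball r (0 : Zn n))) :
    |fderiv ℝ (gB P b) x (eb a)| ≤ P.C := by
  have h1 : |pd2 P.s a.1 b.1 (extB x)| ≤ P.C :=
    P.S4 a.1 b.1 (mem_ball_zero_iff.1 a.2) (mem_ball_zero_iff.1 b.2) _
  rwa [pd2_eq P a.1 b.1 a.2 b.2, projB_extB] at h1

lemma euclid_decomp (v : EuclideanSpace ℝ (ball r (0 : Zn n))) :
    v = ∑ a : ball r (0 : Zn n), v a • eb a := by
  ext b
  rw [WithLp.ofLp_sum, Finset.sum_apply]
  simp only [PiLp.smul_apply, eb, EuclideanSpace.single_apply, smul_eq_mul]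
  simp [Finset.sum_ite_eq' Finset.univ b (fun a => v a)]

lemma fderiv_expand (G : EuclideanSpace ℝ (ball r (0 : Zn n)) → ℝ)
    (x v : EuclideanSpace ℝ (ball r (0 : Zn n))) :
    fderiv ℝ G x v = ∑ a : ball r (0 : Zn n), v a * fderiv ℝ G x (eb a) := by
  conv_lhs => rw [euclid_decomp v]
  rw [map_sum]
  congr 1; funext a
  rw [map_smul]; rfl

end Aux2
section Aux3
variable {n r : ℕ}

lemma segment_hasDerivAt (G : EuclideanSpace ℝ (ball r (0 : Zn n)) → ℝ)
    (hG : Differentiable ℝ G) (x y : EuclideanSpace ℝ (ball r (0 : Zn n))) (θ : ℝ) :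
    HasDerivAt (fun θ : ℝ => G (x + θ • (y - x)))
      (fderiv ℝ G (x + θ • (y - x)) (y - x)) θ := by
  have h1 : HasDerivAt (fun θ : ℝ => x + θ • (y - x)) (y - x) θ := by
    have : HasDerivAt (fun θ : ℝ => θ • (y - x)) ((1:ℝ) • (y - x)) θ :=
      (hasDerivAt_id θ).smul_const _
    simpa using this.const_add x
  exact (hG _).hasFDerivAt.comp_hasDerivAt θ h1

lemma gB_mono (P : Setup n r) (b : ball r (0 : Zn n))
    (x y : EuclideanSpace ℝ (ball r (0 : Zn n))) (hxy : ∀ a, x a ≤ y a)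
    (hb : x b = y b) : gB P b y ≤ gB P b x := by
  set G := gB P b with hGdef
  have hG := gB_diff P b
  obtain ⟨c, _, hc⟩ := exists_hasDerivAt_eq_slope (fun θ : ℝ => G (x + θ • (y - x)))
    (fun θ => fderiv ℝ G (x + θ • (y - x)) (y - x)) one_pos
    (fun θ _ => (segment_hasDerivAt G hG x y θ).continuousAt.continuousWithinAt)
    (fun θ _ => segment_hasDerivAt G hG x y θ)
  have hder : fderiv ℝ G (x + c • (y - x)) (y - x) ≤ 0 := by
    rw [fderiv_expand]
    apply Finset.sum_nonpos
    intro a _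
    rcases eq_or_ne a b with hab | hab
    · subst hab
      have : (y - x) a = 0 := by
        have : y a - x a = 0 := by rw [hb]; ring
        simpa using this
      rw [this]; ring_nf; simp
    · have h1 : (y - x) a ≥ 0 := by
        have := hxy a; simpa using this
      have h2 := gB_deriv_nonpos P a b hab (x + c • (y - x))
      exact mul_nonpos_of_nonneg_of_nonpos h1 h2
  have hx1 : x + (1:ℝ) • (y - x) = y := by abel_nf; simp
  have hx0 : x + (0:ℝ) • (y - x) = x := by simp
  rw [hx1, hx0, sub_zero, div_one] at hc
  rw [hc] at hder
  linarith

lemma gB_lip (P : Setup n r) (b : ball r (0 : Zn n))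
    (x y : EuclideanSpace ℝ (ball r (0 : Zn n))) (M : ℝ) (hxy : ∀ a, |y a - x a| ≤ M) :
    |gB P b y - gB P b x| ≤ P.C * (ball r (0 : Zn n)).card * M := by
  set G := gB P b with hGdef
  have hG := gB_diff P b
  obtain ⟨c, _, hc⟩ := exists_hasDerivAt_eq_slope (fun θ : ℝ => G (x + θ • (y - x)))
    (fun θ => fderiv ℝ G (x + θ • (y - x)) (y - x)) one_pos
    (fun θ _ => (segment_hasDerivAt G hG x y θ).continuousAt.continuousWithinAt)
    (fun θ _ => segment_hasDerivAt G hG x y θ)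
  have hder : |fderiv ℝ G (x + c • (y - x)) (y - x)| ≤ P.C * (ball r (0 : Zn n)).card * M := by
    rw [fderiv_expand]
    calc |∑ a : ball r (0 : Zn n), (y - x) a * fderiv ℝ G (x + c • (y - x)) (eb a)|
        ≤ ∑ a : ball r (0 : Zn n), |(y - x) a * fderiv ℝ G (x + c • (y - x)) (eb a)| :=
          Finset.abs_sum_le_sum_abs _ _
      _ ≤ ∑ _a : ball r (0 : Zn n), M * P.C := by
          apply Finset.sum_le_sum
          intro a _
          rw [abs_mul]
          have h1 : |(y - x) a| ≤ M := by
            have := hxy a; simpa using this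
          have h2 := gB_deriv_bound P a b (x + c • (y - x))
          exact mul_le_mul h1 h2 (abs_nonneg _) (le_trans (abs_nonneg _) h1)
      _ = P.C * (ball r (0 : Zn n)).card * M := by
          rw [Finset.sum_const]
          simp [Finset.card_univ]
          ring
  have hx1 : x + (1:ℝ) • (y - x) = y := by abel_nf; simp
  have hx0 : x + (0:ℝ) • (y - x) = x := by simp
  rw [hx1, hx0, sub_zero, div_one] at hc
  rw [← hc]
  exact hder

end Aux3
section Aux4
variable {n r : ℕ}

lemma negmem {d : Zn n} (hd : d ∈ ball r (0 : Zn n)) : -d ∈ ball r (0 : Zn n) := by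
  rw [mem_ball_zero_iff, znorm_neg]; exact mem_ball_zero_iff.1 hd

lemma shift_update (j : Zn n) (u : Zn n → ℝ) (i : Zn n) (t : ℝ) :
    shift j (Function.update u i t) = Function.update (shift j u) (i - j) t := by
  funext m
  simp only [shift, Function.update_apply]
  have hiff : m + j = i ↔ m = i - j := by
    constructor
    · intro hh; rw [← hh]; abel
    · intro hh; rw [hh]; abel
  by_cases hm : m = i - j
  · rw [if_pos (hiff.2 hm), if_pos hm]
  · rw [if_neg (fun hh => hm (hiff.1 hh)), if_neg hm]

lemma shift_apply_sub (j : Zn n) (u : Zn n → ℝ) (i : Zn n) : shift j u (i - j) = u i := by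
  simp [shift, sub_add_cancel]

lemma pd_Spot (s : (Zn n → ℝ) → ℝ) (j i : Zn n) (u : Zn n → ℝ) :
    pd (Spot s j) i u = pd s (i - j) (shift j u) := by
  unfold pd Spot
  have h1 : (fun t => s (shift j (Function.update u i t)))
      = fun t => s (Function.update (shift j u) (i - j) t) := by
    funext t; rw [shift_update]
  rw [h1, shift_apply_sub]

lemma grad_eq_pd (s : (Zn n → ℝ) → ℝ) (u : Zn n → ℝ) (i : Zn n) :
    grad r s u i = ∑ d ∈ ball r (0 : Zn n), pd s (-d) (shift (d + i) u) := by
  unfold grad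
  refine Finset.sum_nbij' (fun j => j - i) (fun d => d + i) ?_ ?_ ?_ ?_ ?_
  · intro j hj; exact mem_ball_iff.1 hj
  · intro d hd; exact mem_ball_iff.2 (by simpa using hd)
  · intro j _; exact sub_add_cancel j i
  · intro d _; exact add_sub_cancel_right d i
  · intro j hj
    rw [pd_Spot, neg_sub, sub_add_cancel]

lemma grad_quasimono (P : Setup n r) (u v : Zn n → ℝ) (huv : u ≤ v) (i : Zn n)
    (hi : u i = v i) : grad r P.s v i ≤ grad r P.s u i := by
  rw [grad_eq_pd, grad_eq_pd,
    ← Finset.sum_attach (ball r (0 : Zn n)) (fun d => pd P.s (-d) (shift (d + i) u)),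
    ← Finset.sum_attach (ball r (0 : Zn n)) (fun d => pd P.s (-d) (shift (d + i) v))]
  apply Finset.sum_le_sum
  intro d _
  rw [pd_eq_gB P (-d.1) (negmem d.2), pd_eq_gB P (-d.1) (negmem d.2)]
  apply gB_mono
  · intro a; exact huv _
  · show shift (d.1 + i) u (-d.1) = shift (d.1 + i) v (-d.1)
    simp only [shift, neg_add_cancel_left]
    exact hi

lemma grad_lip (P : Setup n r) (u v : Zn n → ℝ) (M : ℝ)
    (hM : ∀ j, |u j - v j| ≤ M) (i : Zn n) :
    |grad r P.s u i - grad r P.s v i|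
      ≤ P.C * (ball r (0 : Zn n)).card * (ball r (0 : Zn n)).card * M := by
  rw [grad_eq_pd, grad_eq_pd,
    ← Finset.sum_attach (ball r (0 : Zn n)) (fun d => pd P.s (-d) (shift (d + i) u)),
    ← Finset.sum_attach (ball r (0 : Zn n)) (fun d => pd P.s (-d) (shift (d + i) v)),
    ← Finset.sum_sub_distrib]
  calc |∑ d ∈ (ball r (0 : Zn n)).attach,
        (pd P.s (-d.1) (shift (d.1 + i) u) - pd P.s (-d.1) (shift (d.1 + i) v))|
      ≤ ∑ d ∈ (ball r (0 : Zn n)).attach,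
        |pd P.s (-d.1) (shift (d.1 + i) u) - pd P.s (-d.1) (shift (d.1 + i) v)| :=
        Finset.abs_sum_le_sum_abs _ _
    _ ≤ ∑ _d ∈ (ball r (0 : Zn n)).attach, P.C * (ball r (0 : Zn n)).card * M := by
        apply Finset.sum_le_sum
        intro d _
        rw [pd_eq_gB P (-d.1) (negmem d.2), pd_eq_gB P (-d.1) (negmem d.2)]
        exact gB_lip P _ _ _ M (fun a => hM _)
    _ = P.C * (ball r (0 : Zn n)).card * (ball r (0 : Zn n)).card * M := by
        rw [Finset.sum_const, Finset.card_attach, nsmul_eq_mul]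
        ring

lemma C_nonneg (P : Setup n r) : 0 ≤ P.C :=
  le_trans (abs_nonneg _) (P.S4 0 0 (by simp [znorm]) (by simp [znorm]) 0)

end Aux4
section Aux5
variable {n : ℕ}

lemma periodic_add_zsmul (p : Fin n → ℕ) (u : Zn n → ℝ) (hu : Periodic p u)
    (m : Fin n) (c : ℤ) (i : Zn n) : u (i + c • ((p m : ℤ) • unitv m)) = u i := by
  induction c using Int.induction_on with
  | zero => simp
  | succ c ih =>
      have h1 : i + ((c : ℤ) + 1) • ((p m : ℤ) • unitv m)
          = (i + (c : ℤ) • ((p m : ℤ) • unitv m)) + (p m : ℤ) • unitv m := by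
        rw [add_smul, one_smul]; abel
      rw [h1, hu _ m, ih]
  | pred c ih =>
      have h1 : (i + (-(c : ℤ) - 1) • ((p m : ℤ) • unitv m)) + (p m : ℤ) • unitv m
          = i + (-(c : ℤ)) • ((p m : ℤ) • unitv m) := by
        rw [sub_smul, one_smul]; abel
      calc u (i + (-(c : ℤ) - 1) • ((p m : ℤ) • unitv m))
          = u ((i + (-(c : ℤ) - 1) • ((p m : ℤ) • unitv m)) + (p m : ℤ) • unitv m) :=
            (hu _ m).symm
        _ = u i := by rw [h1, ih]

lemma periodic_eq_reduce (p : Fin n → ℕ) (u : Zn n → ℝ)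
    (hu : Periodic p u) (i : Zn n) : u i = u (fun m => i m % (p m : ℤ)) := by
  have key : ∀ S : Finset (Fin n),
      u (fun m => if m ∈ S then i m % (p m : ℤ) else i m) = u i := by
    intro S
    induction S using Finset.induction_on with
    | empty => simp
    | @insert m0 S hm0 ih =>
        have hvec : (fun m => if m ∈ insert m0 S then i m % (p m : ℤ) else i m)
            = (fun m => if m ∈ S then i m % (p m : ℤ) else i m)
              + (-(i m0 / (p m0 : ℤ))) • ((p m0 : ℤ) • unitv m0) := by
          funext m
          simp only [Pi.add_apply, Pi.smul_apply, unitv, smul_eq_mul]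
          rcases eq_or_ne m m0 with hm | hm
          · subst hm
            rw [if_pos (Finset.mem_insert_self m S), if_neg hm0, if_pos rfl,
              Int.emod_def]
            ring
          · rw [if_neg hm]
            by_cases hS : m ∈ S
            · rw [if_pos (Finset.mem_insert_of_mem hS), if_pos hS]; ring
            · rw [if_neg (by simp [Finset.mem_insert, hm, hS]), if_neg hS]; ring
        rw [hvec, periodic_add_zsmul p u hu m0, ih]
  have := key Finset.univ
  simp only [Finset.mem_univ, if_true] at this
  exact this.symm

lemma reduce_mem_Tbox (p : Fin n → ℕ) (hp : ∀ m, 0 < p m) (i : Zn n) :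
    (fun m => i m % (p m : ℤ)) ∈ Tbox p := by
  rw [Tbox, Finset.mem_Icc]
  constructor <;> intro m
  · exact Int.emod_nonneg _ (by exact_mod_cast (hp m).ne')
  · show i m % (p m : ℤ) ≤ (p m : ℤ) - 1
    have := Int.emod_lt_of_pos (i m) (b := (p m : ℤ)) (by exact_mod_cast hp m)
    omega

lemma Tbox_nonempty (p : Fin n → ℕ) (hp : ∀ m, 0 < p m) : (Tbox p).Nonempty := by
  refine ⟨0, ?_⟩
  rw [Tbox, Finset.mem_Icc]
  constructor <;> intro m
  · exact le_refl _
  · show (0 : Zn n) m ≤ (p m : ℤ) - 1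
    have := hp m
    simp only [Pi.zero_apply]
    omega

lemma periodic_le_sup (p : Fin n → ℕ) (hp : ∀ m, 0 < p m) (w : Zn n → ℝ)
    (hw : Periodic p w) (hT : (Tbox p).Nonempty) (i : Zn n) :
    w i ≤ (Tbox p).sup' hT w := by
  rw [periodic_eq_reduce p w hw i]
  exact Finset.le_sup' w (reduce_mem_Tbox p hp i)

lemma periodic_sub (p : Fin n → ℕ) (u v : Zn n → ℝ) (hu : Periodic p u)
    (hv : Periodic p v) : Periodic p (fun j => u j - v j) := by
  intro i m
  simp only
  rw [hu i m, hv i m]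

lemma pk_pos {k : ℕ} (hk : 1 ≤ k) (m : Fin n) : 0 < pk n k m := by
  rw [pk]; split <;> omega

end Aux5
section Aux6
variable {n r : ℕ}

theorem flow_comparison {k : ℕ} (P : Setup n r) (hk : 1 ≤ k) (v0 : Zn n → ℝ)
    (Φ : ℝ → (Zn n → ℝ) → (Zn n → ℝ)) (hΦ : IsFlow r P.s (pk n k) v0 Φ)
    (u v : Zn n → ℝ) (hu : Periodic (pk n k) u) (hv : Periodic (pk n k) v)
    (huv : u ≤ v) (t : ℝ) (ht : 0 ≤ t) : Φ t u ≤ Φ t v := by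
  set p := pk n k with hpdef
  have hp : ∀ m, 0 < p m := pk_pos hk
  have hT : (Tbox p).Nonempty := Tbox_nonempty p hp
  set a : ℝ → Zn n → ℝ := fun τ => Φ τ u with hadef
  set b : ℝ → Zn n → ℝ := fun τ => Φ τ v with hbdef
  have hpera : ∀ τ, Periodic p (a τ) := fun τ => hΦ.1 u hu τ
  have hperb : ∀ τ, Periodic p (b τ) := fun τ => hΦ.1 v hv τ
  -- the difference functions and their derivatives
  set L : ℝ := P.C * (ball r (0 : Zn n)).card * (ball r (0 : Zn n)).card with hLdef
  have hL : 0 ≤ L := by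
    apply mul_nonneg (mul_nonneg (C_nonneg P) (by positivity)) (by positivity)
  set D : Zn n → ℝ → ℝ := fun i τ =>
    (-(grad r P.s (a τ + v0) i)) - (-(grad r P.s (b τ + v0) i)) with hDdef
  have hfd : ∀ (i : Zn n), ∀ τ ∈ Set.Ici (0:ℝ),
      HasDerivWithinAt (fun σ => a σ i - b σ i) (D i τ) (Set.Ici 0) τ := by
    intro i τ hτ
    exact (hΦ.2.2 u hu i τ hτ).sub (hΦ.2.2 v hv i τ hτ)
  -- the Gronwall function
  set m' : ℝ → ℝ := fun τ => (Tbox p).sup' hT (fun i => a τ i - b τ i) with hmdef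
  set g : ℝ → ℝ := fun τ => max (m' τ) 0 with hgdef
  have hg0 : ∀ τ, 0 ≤ g τ := fun τ => le_max_right _ _
  have hmg : ∀ τ, m' τ ≤ g τ := fun τ => le_max_left _ _
  have hfm : ∀ τ (i : Zn n), a τ i - b τ i ≤ m' τ := by
    intro τ i
    exact periodic_le_sup p hp _ (periodic_sub p (a τ) (b τ) (hpera τ) (hperb τ)) hT i
  -- initial value
  have hga : g 0 ≤ 0 := by
    apply max_le _ le_rfl
    apply Finset.sup'_le
    intro i _
    have h1 : a 0 = u := hΦ.2.1 u
    have h2 : b 0 = v := hΦ.2.1 v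
    rw [h1, h2]
    have := huv i
    linarith
  -- continuity
  have hconta : ∀ i : Zn n, ContinuousOn (fun τ => a τ i - b τ i) (Set.Icc 0 t) := by
    intro i
    intro τ hτ
    exact ((hfd i τ (Set.mem_Icc.1 hτ).1).continuousWithinAt).mono
      (fun z hz => (Set.mem_Icc.1 hz).1)
  have hcont : ContinuousOn g (Set.Icc 0 t) := by
    have hsup : ContinuousOn (fun τ => m' τ) (Set.Icc 0 t) :=
      ContinuousOn.finset_sup'_apply hT (fun i _ => hconta i)
    exact hsup.sup continuousOn_const
  -- the key derivative bound at maximizing indices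
  have hkey : ∀ τ ∈ Set.Ici (0:ℝ), ∀ i, a τ i - b τ i = g τ → D i τ ≤ L * g τ := by
    intro τ _ i hgi
    set abar : Zn n → ℝ := a τ + v0 with habar
    set bbar : Zn n → ℝ := b τ + v0 with hbbar
    set c : Zn n → ℝ := fun j => bbar j + g τ with hcdef
    have h1 : abar ≤ c := by
      intro j
      have := hfm τ j
      have := hmg τ
      simp only [habar, hcdef, hbbar, Pi.add_apply]
      linarith [hfm τ j, hmg τ]
    have h2 : abar i = c i := by
      simp only [habar, hcdef, hbbar, Pi.add_apply]
      linarith [hgi]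
    have q1 : grad r P.s c i ≤ grad r P.s abar i := grad_quasimono P abar c h1 i h2
    have q2 : |grad r P.s c i - grad r P.s bbar i| ≤ L * g τ := by
      have := grad_lip P c bbar (g τ) (fun j => by
        simp only [hcdef]
        rw [add_sub_cancel_left, abs_of_nonneg (hg0 τ)]) i
      calc |grad r P.s c i - grad r P.s bbar i|
          ≤ P.C * (ball r (0 : Zn n)).card * (ball r (0 : Zn n)).card * g τ := this
        _ = L * g τ := by rw [hLdef]
    have q3 : grad r P.s bbar i - grad r P.s c i ≤ L * g τ := by
      rw [abs_sub_comm] at q2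
      linarith [le_abs_self (grad r P.s bbar i - grad r P.s c i)]
    simp only [hDdef]
    linarith
  -- Gronwall
  have hgro : ∀ x ∈ Set.Icc (0:ℝ) t, g x ≤ gronwallBound 0 L 0 (x - 0) := by
    apply le_gronwallBound_of_liminf_deriv_right_le (f' := fun τ => L * g τ) hcont
    · -- liminf slope condition
      intro x hx ρ hρ
      have hx0 : (0:ℝ) ≤ x := (Set.mem_Ico.1 hx).1
      have hρ0 : 0 < ρ := lt_of_le_of_lt (mul_nonneg hL (hg0 x)) hρ
      have hIoi : Set.Ioi x ⊆ Set.Ici (0:ℝ) := fun z hz => le_trans hx0 (le_of_lt hz)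
      have hev : ∀ i ∈ Tbox p, ∀ᶠ z in nhdsWithin x (Set.Ioi x),
          a z i - b z i - g x < ρ * (z - x) := by
        intro i _
        rcases lt_or_eq_of_le (le_trans (hfm x i) (hmg x)) with hlt | heq
        · -- non-achiever: use continuity
          have hcw : Tendsto (fun z => a z i - b z i) (nhdsWithin x (Set.Ioi x))
              (nhds (a x i - b x i)) :=
            ((hfd i x hx0).continuousWithinAt).mono hIoi
          have h1 : ∀ᶠ z in nhdsWithin x (Set.Ioi x), a z i - b z i < g x :=
            hcw.eventually_lt_const hlt
          filter_upwards [h1, self_mem_nhdsWithin] with z hz1 hz2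
          have : (0:ℝ) < ρ * (z - x) := mul_pos hρ0 (by simpa using sub_pos.2 (Set.mem_Ioi.1 hz2))
          linarith
        · -- achiever: use the derivative bound
          have hDb : D i x < ρ := lt_of_le_of_lt (hkey x hx0 i heq) hρ
          have hslope : Tendsto (slope (fun z => a z i - b z i) x)
              (nhdsWithin x (Set.Ioi x)) (nhds (D i x)) := by
            have := hasDerivWithinAt_iff_tendsto_slope.1 (hfd i x hx0)
            exact this.mono_left (nhdsWithin_mono x (fun z hz =>
              ⟨hIoi hz, ne_of_gt hz⟩))
          have h1 : ∀ᶠ z in nhdsWithin x (Set.Ioi x),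
              slope (fun z => a z i - b z i) x z < ρ := hslope.eventually_lt_const hDb
          filter_upwards [h1, self_mem_nhdsWithin] with z hz1 hz2
          rw [slope_def_field] at hz1
          have hzx : (0:ℝ) < z - x := sub_pos.2 hz2
          have := (div_lt_iff₀ hzx).1 hz1
          rw [heq] at this
          linarith
      have hev2 : ∀ᶠ z in nhdsWithin x (Set.Ioi x),
          (z - x)⁻¹ * (g z - g x) < ρ := by
        filter_upwards [(Filter.eventually_all_finset (Tbox p)).2 hev,
          self_mem_nhdsWithin] with z hz1 hz2
        have hzx : (0:ℝ) < z - x := sub_pos.2 hz2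
        have hlt : g z < g x + ρ * (z - x) := by
          apply max_lt
          · rw [Finset.sup'_lt_iff]
            intro i hi
            have := hz1 i hi
            linarith
          · have := hg0 x
            nlinarith
        rw [inv_mul_lt_iff₀ hzx]
        nlinarith
      exact hev2.frequently
    · exact hga
    · intro x _
      simp
  -- conclusion
  intro i
  have h1 : g t ≤ 0 := by
    have := hgro t (Set.mem_Icc.2 ⟨ht, le_rfl⟩)
    rwa [sub_zero, gronwallBound_ε0, zero_mul] at this
  have h2 : a t i - b t i ≤ 0 := le_trans (le_trans (hfm t i) (hmg t)) h1
  show a t i ≤ b t i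
  linarith

end Aux6
/-- for a monotone path `h ∈ Ĥ_0^{p(k)}`, `t > 0` with the set defining `θ̲_t`
nonempty, every `θ ∈ [0,1]` with `θ < θ̲_t` satisfies: either `Φ_t⁰(h(θ)) < u₀` pointwise, or
`Φ_t⁰(h(θ))` touches `u₀` from below. -/
theorem statement11 {n r : ℕ} (P : Setup n r) (v0 w0 : Zn n → ℝ)
    (hv0 : v0 ∈ M0 P.s) (hw0 : w0 ∈ M0 P.s) (hlt : ∀ i, v0 i < w0 i)
    (hadj : ∀ u ∈ M0 P.s, u ≠ v0 → u ≠ w0 → ¬(v0 ≤ u ∧ u ≤ w0))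
    (k : ℕ) (hk : 1 ≤ k)
    (u0 : Zn n → ℝ) (hu0per : PeriodicAll u0)
    (hu0b : ∀ i, 0 < u0 i ∧ u0 i < w0 i - v0 i)
    (hu0sol : IsSolution r P.s (u0 + v0))
    (Φ : ℝ → (Zn n → ℝ) → (Zn n → ℝ)) (hΦ : IsFlow r P.s (pk n k) v0 Φ)
    (h : ℝ → Zn n → ℝ) (hpath : PathIn (pk n k) v0 w0 h)
    (hmono : ∀ θ1 θ2 : ℝ, θ2 < θ1 → h θ2 ≤ h θ1)
    (t : ℝ) (ht : 0 < t)
    (hne : {θ | θ ∈ Set.Icc (0 : ℝ) 1 ∧ Φ t (h θ) ≤ u0 ∧ Φ t (h θ) ≠ u0}.Nonempty) :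
    ∀ θ ∈ Set.Icc (0 : ℝ) 1, θ < thetaLow Φ h u0 t →
      (∀ i, Φ t (h θ) i < u0 i) ∨ TouchesBelow (Φ t (h θ)) u0 := by
  intro θ hθ hθlow
  obtain ⟨θ', hθ'S, hθθ'⟩ := exists_lt_of_lt_csSup hne (by
    rw [thetaLow] at hθlow; exact hθlow)
  obtain ⟨hθ'I, hθ'le, hθ'ne⟩ := hθ'S
  have hper : ∀ σ, σ ∈ Set.Icc (0:ℝ) 1 → Periodic (pk n k) (h σ) := by
    intro σ hσ
    exact (hpath.2.1 σ hσ).1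
  have hcomp : Φ t (h θ) ≤ Φ t (h θ') :=
    flow_comparison P hk v0 Φ hΦ (h θ) (h θ') (hper θ hθ) (hper θ' hθ'I)
      (hmono θ' θ hθθ') t ht.le
  have hle : Φ t (h θ) ≤ u0 := le_trans hcomp hθ'le
  have hne0 : Φ t (h θ) ≠ u0 := by
    intro heq
    apply hθ'ne
    apply le_antisymm hθ'le
    rw [← heq]
    exact hcomp
  by_cases hex : ∃ i, Φ t (h θ) i = u0 i
  · exact Or.inr ⟨hle, hne0, hex⟩
  · push_neg at hex
    exact Or.inl fun i => lt_of_le_of_ne (hle i) (hex i)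
end
end FK
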